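/- Let γ ∈ ℝ^{N−1} satisfy Mγ = 0. Then for all 1 ≤ i ≤ N−1: γ_i − Σ_{m=1}^{N−1} γ_m Σ_{j∈Ω} [(p_j/k_{m,j})·KB_i(a_{m,j}) − (p_j/k_{m+1,j})·KB_i(b_{m,j})] = 0. -/

import Mathlib

open Set

noncomputable section

/-- `T_ω = T_{ω_t} ∘ ⋯ ∘ T_{ω_1}` (head of the list applied first). -/
def rwordApply (T : ℕ → ℝ → ℝ) : List ℕ → ℝ → ℝ
  | [], y => y
  | j :: ω, y => rwordApply T ω (T j y)

/-- the weighted slope product `δ_ω(y,|ω|)`; `ι x` is the index of the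
partition interval containing `x`. -/
def rdelta (p : ℕ → ℝ) (k : ℕ → ℕ → ℝ) (ι : ℝ → ℕ) (T : ℕ → ℝ → ℝ) :
    List ℕ → ℝ → ℝ
  | [], _ => 1
  | j :: ω, y => p j / k (ι y) j * rdelta p k ι T ω (T j y)

/-- the random piecewise linear map with slopes `k`, intercepts `d`. -/
def Tpl (k d : ℕ → ℕ → ℝ) (ι : ℝ → ℕ) (j : ℕ) (x : ℝ) : ℝ :=
  k (ι x) j * x + d (ι x) j

/-- finite words with letters in `Ωs`. -/
def Words (Ωs : Set ℕ) : Type := {ω : List ℕ // ∀ j ∈ ω, j ∈ Ωs}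

/-- `KI_n(y) = Σ_{t≥1} Σ_{ω ∈ Ωᵗ} δ_ω(y,t)·1_{I_n}(T_{ω₁^{t-1}}(y))`. -/
def KI (Ωs : Set ℕ) (p : ℕ → ℝ) (k : ℕ → ℕ → ℝ) (ι : ℝ → ℕ) (T : ℕ → ℝ → ℝ)
    (n : ℕ) (y : ℝ) : ℝ :=
  ∑' ω : {ω : List ℕ // (∀ j ∈ ω, j ∈ Ωs) ∧ ω ≠ []},
    if ι (rwordApply T ω.1.dropLast y) = n then rdelta p k ι T ω.1 y else 0

/-- `KA_i(y) = Σ_{t≥0} Σ_{ω ∈ Ωᵗ} δ_ω(y,t)·1_{I_1 ∪ ⋯ ∪ I_i}(T_ω(y))`. -/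
def KA (Ωs : Set ℕ) (p : ℕ → ℝ) (k : ℕ → ℕ → ℝ) (ι : ℝ → ℕ) (T : ℕ → ℝ → ℝ)
    (i : ℕ) (y : ℝ) : ℝ :=
  ∑' ω : Words Ωs,
    if ι (rwordApply T ω.1 y) ≤ i then rdelta p k ι T ω.1 y else 0

/-- `KB_i(y) = Σ_{t≥0} Σ_{ω ∈ Ωᵗ} δ_ω(y,t)·1_{I_{i+1} ∪ ⋯ ∪ I_N}(T_ω(y))`. -/
def KB (Ωs : Set ℕ) (p : ℕ → ℝ) (k : ℕ → ℕ → ℝ) (ι : ℝ → ℕ) (T : ℕ → ℝ → ℝ)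
    (i : ℕ) (y : ℝ) : ℝ :=
  ∑' ω : Words Ωs,
    if i < ι (rwordApply T ω.1 y) then rdelta p k ι T ω.1 y else 0

/-- `S_n = Σ_{j∈Ω} p_j / k_{n,j}`, the average inverse slope on `I_n`. -/
def Sav (Ωs : Set ℕ) (p : ℕ → ℝ) (k : ℕ → ℕ → ℝ) (n : ℕ) : ℝ :=
  ∑' j : Ωs, p j.1 / k n j.1

/-- `a_{i,j} = k_{i,j} z_i + d_{i,j}`, the left limit of `T_j` at `z_i`. -/
def aPt (k d : ℕ → ℕ → ℝ) (z : ℕ → ℝ) (i j : ℕ) : ℝ := k i j * z i + d i j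

/-- `b_{i,j} = k_{i+1,j} z_i + d_{i+1,j}`, the right limit of `T_j` at `z_i`. -/
def bPt (k d : ℕ → ℕ → ℝ) (z : ℕ → ℝ) (i j : ℕ) : ℝ := k (i + 1) j * z i + d (i + 1) j

/-- the entries `μ_{n,i}` of the fundamental matrix (Definition 3.2). -/
def fundM (Ωs : Set ℕ) (p : ℕ → ℝ) (k d : ℕ → ℕ → ℝ) (ι : ℝ → ℕ) (z : ℕ → ℝ)
    (n i : ℕ) : ℝ :=
  ∑' j : Ωs,
    ((if n = i then p j.1 / k i j.1 else 0) -
      (if n = i + 1 then p j.1 / k (i + 1) j.1 else 0) +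
      (p j.1 / k i j.1 * KI Ωs p k ι (Tpl k d ι) n (aPt k d z i j.1) -
        p j.1 / k (i + 1) j.1 * KI Ωs p k ι (Tpl k d ι) n (bPt k d z i j.1)))

/-!
Divide the `n`-th equation of `Mγ = 0` by `S_n` and add up the equations with `n > i`.
Splitting off the last letter of a word gives `KI_n = S_n · L_n`, where `L_n(y)` sums `δ_ω(y)`
over the words `ω` with `T_ω(y) ∈ I_n`, and `KB_i = Σ_{i < n ≤ N} L_n` as `ι` takes values in
`{1, …, N}`. Hence in
column `m` the `KI`-terms turn into the `KB`-terms, while the diagonal terms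
`δ_{nm} S_m - δ_{n,m+1} S_{m+1}` contribute `1_{i < m} - 1_{i ≤ m} = -δ_{mi}`. Every series
converges absolutely, since `Σ_j p_j / |k_{n,j}| ≤ ρ < 1` bounds `Σ_ω |δ_ω(y)|` by `1 / (1 - ρ)`.
-/

section Words

variable {Ωs : Set ℕ} {p : ℕ → ℝ} {k : ℕ → ℕ → ℝ} {ι : ℝ → ℕ} {T : ℕ → ℝ → ℝ}
  {X : Set ℝ} {ρ : ℝ}

lemma rdelta_append_singleton (ω : List ℕ) (j : ℕ) (y : ℝ) :
    rdelta p k ι T (ω ++ [j]) y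
      = rdelta p k ι T ω y * (p j / k (ι (rwordApply T ω y)) j) := by
  induction ω generalizing y with
  | nil => simp [rdelta, rwordApply]
  | cons a ω ih => simp only [List.cons_append, rdelta, rwordApply, ih]; ring

lemma mapsTo_rwordApply (hT : ∀ j ∈ Ωs, MapsTo (T j) X X) :
    ∀ ω : List ℕ, (∀ j ∈ ω, j ∈ Ωs) → MapsTo (rwordApply T ω) X X
  | [], _ => mapsTo_id X
  | j :: ω, hω => (mapsTo_rwordApply hT ω fun i hi => hω i (List.mem_cons_of_mem j hi)).comp
      (hT j (hω j List.mem_cons_self))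

lemma sum_abs_rdelta_le (hp : ∀ j ∈ Ωs, 0 ≤ p j) (hT : ∀ j ∈ Ωs, MapsTo (T j) X X)
    (hA : ∀ x ∈ X, Summable (fun j : Ωs => p j / |k (ι x) j|) ∧
      ∑' j : Ωs, p j / |k (ι x) j| ≤ ρ) (hρ : ρ < 1) (L : ℕ) :
    ∀ S : Finset (List ℕ), (∀ ω ∈ S, (∀ j ∈ ω, j ∈ Ωs) ∧ ω.length ≤ L) →
      ∀ y ∈ X, ∑ ω ∈ S, |rdelta p k ι T ω y| ≤ (1 - ρ)⁻¹ := by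
  classical
  intro S hS y hy
  have hρ0 : 0 ≤ ρ := (tsum_nonneg fun j : Ωs => div_nonneg (hp j j.2) (abs_nonneg _)).trans
    (hA y hy).2
  have hC : 1 ≤ (1 - ρ)⁻¹ := one_le_inv₀ (by linarith) |>.mpr (by linarith)
  induction L generalizing S y with
  | zero =>
    have hsub : S ⊆ {[]} := fun ω hω => by
      simp [List.length_eq_zero_iff.mp (Nat.le_zero.mp (hS ω hω).2)]
    calc ∑ ω ∈ S, |rdelta p k ι T ω y|
        ≤ ∑ ω ∈ {[]}, |rdelta p k ι T ω y| :=
          Finset.sum_le_sum_of_subset_of_nonneg hsub fun _ _ _ => abs_nonneg _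
      _ ≤ (1 - ρ)⁻¹ := by simpa [rdelta] using hC
  | succ L ih =>
    set J := S.biUnion List.toFinset
    set Tl := S.image List.tail
    have hJ : ∀ j ∈ J, j ∈ Ωs := by
      simp only [J, Finset.mem_biUnion, List.mem_toFinset]
      rintro j ⟨ω, hω, hj⟩
      exact (hS ω hω).1 j hj
    have hsub : S ⊆ insert [] ((J ×ˢ Tl).image fun q => q.1 :: q.2) := by
      rintro (_ | ⟨j, ω⟩) hω
      · exact Finset.mem_insert_self _ _
      · refine Finset.mem_insert_of_mem (Finset.mem_image.mpr ⟨(j, ω), ?_, rfl⟩)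
        exact Finset.mem_product.mpr ⟨Finset.mem_biUnion.mpr ⟨_, hω, by simp⟩,
          Finset.mem_image.mpr ⟨_, hω, rfl⟩⟩
    have hTl : ∀ ω ∈ Tl, (∀ j ∈ ω, j ∈ Ωs) ∧ ω.length ≤ L := by
      simp only [Tl, Finset.mem_image]
      rintro _ ⟨ω, hω, rfl⟩
      refine ⟨fun j hj => (hS ω hω).1 j (List.mem_of_mem_tail hj), ?_⟩
      have := (hS ω hω).2
      rw [List.length_tail]
      omega
    have hJρ : ∑ j ∈ J, p j / |k (ι y) j| ≤ ρ := by
      rw [← Finset.sum_subtype_of_mem (fun j => p j / |k (ι y) j|) hJ]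
      exact ((hA y hy).1.sum_le_tsum _ fun j _ => div_nonneg (hp _ j.2) (abs_nonneg _)).trans
        (hA y hy).2
    calc ∑ ω ∈ S, |rdelta p k ι T ω y|
        ≤ ∑ ω ∈ insert [] ((J ×ˢ Tl).image fun q => q.1 :: q.2), |rdelta p k ι T ω y| :=
          Finset.sum_le_sum_of_subset_of_nonneg hsub fun _ _ _ => abs_nonneg _
      _ = 1 + ∑ j ∈ J, p j / |k (ι y) j| * ∑ ω ∈ Tl, |rdelta p k ι T ω (T j y)| := by
          rw [Finset.sum_insert (by simp), Finset.sum_image (by simp +contextual [Set.InjOn]),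
            Finset.sum_product]
          simp only [rdelta, abs_one, Finset.mul_sum]
          refine congrArg _ (Finset.sum_congr rfl fun j hj => Finset.sum_congr rfl fun _ _ => ?_)
          rw [abs_mul, abs_div, abs_of_nonneg (hp j (hJ j hj))]
      _ ≤ 1 + ∑ j ∈ J, p j / |k (ι y) j| * (1 - ρ)⁻¹ := by
          gcongr with j hj
          · exact div_nonneg (hp j (hJ j hj)) (abs_nonneg _)
          · exact ih Tl hTl (T j y) (hT j (hJ j hj) hy)
      _ ≤ 1 + ρ * (1 - ρ)⁻¹ := by
          rw [← Finset.sum_mul]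
          gcongr
      _ = (1 - ρ)⁻¹ := by
          have : 1 - ρ ≠ 0 := by linarith
          field_simp
          ring

end Words

section Sums

variable {Ωs : Set ℕ} {p : ℕ → ℝ} {k : ℕ → ℕ → ℝ} {ι : ℝ → ℕ} {T : ℕ → ℝ → ℝ}
  {X : Set ℝ} {ρ : ℝ} {y : ℝ}

lemma summable_abs_rdelta (hp : ∀ j ∈ Ωs, 0 ≤ p j) (hT : ∀ j ∈ Ωs, MapsTo (T j) X X)
    (hA : ∀ x ∈ X, Summable (fun j : Ωs => p j / |k (ι x) j|) ∧
      ∑' j : Ωs, p j / |k (ι x) j| ≤ ρ) (hρ : ρ < 1) (hy : y ∈ X) :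
    Summable (fun ω : Words Ωs => |rdelta p k ι T ω.1 y|) ∧
      ∑' ω : Words Ωs, |rdelta p k ι T ω.1 y| ≤ (1 - ρ)⁻¹ := by
  have hfin : ∀ u : Finset (Words Ωs), ∑ ω ∈ u, |rdelta p k ι T ω.1 y| ≤ (1 - ρ)⁻¹ := by
    intro u
    set V := u.image fun ω : Words Ωs => ω.1
    calc ∑ ω ∈ u, |rdelta p k ι T ω.1 y| = ∑ ω ∈ V, |rdelta p k ι T ω y| :=
          (Finset.sum_image (f := fun ω => |rdelta p k ι T ω y|) (s := u)
            (g := fun ω : Words Ωs => ω.1) fun _ _ _ _ => Subtype.ext).symm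
      _ ≤ (1 - ρ)⁻¹ := by
          refine sum_abs_rdelta_le hp hT hA hρ (V.sup List.length) V (fun ω hω => ?_) y hy
          obtain ⟨ω', -, rfl⟩ := Finset.mem_image.mp hω
          exact ⟨ω'.2, Finset.le_sup hω⟩
  have hsum := summable_of_sum_le (fun ω => abs_nonneg _) hfin
  exact ⟨hsum, hsum.tsum_le_of_sum_le hfin⟩

lemma summable_ite_rdelta (hp : ∀ j ∈ Ωs, 0 ≤ p j) (hT : ∀ j ∈ Ωs, MapsTo (T j) X X)
    (hA : ∀ x ∈ X, Summable (fun j : Ωs => p j / |k (ι x) j|) ∧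
      ∑' j : Ωs, p j / |k (ι x) j| ≤ ρ) (hρ : ρ < 1) (hy : y ∈ X)
    (c : List ℕ → Prop) [DecidablePred c] :
    Summable (fun ω : Words Ωs => ‖if c ω.1 then rdelta p k ι T ω.1 y else 0‖) ∧
      ‖∑' ω : Words Ωs, if c ω.1 then rdelta p k ι T ω.1 y else 0‖ ≤ (1 - ρ)⁻¹ := by
  obtain ⟨hsum, hle⟩ := summable_abs_rdelta hp hT hA hρ hy
  have hdom : ∀ ω : Words Ωs,
      ‖if c ω.1 then rdelta p k ι T ω.1 y else 0‖ ≤ |rdelta p k ι T ω.1 y| := fun ω => by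
    split_ifs <;> simp
  exact ⟨hsum.of_nonneg_of_le (fun _ => norm_nonneg _) hdom,
    (tsum_of_norm_bounded hsum.hasSum hdom).trans hle⟩

end Sums

/-- `Σ_{t≥0} Σ_{ω ∈ Ωᵗ} δ_ω(y,t)·1_{I_n}(T_ω(y))`. -/
def landingSum (Ωs : Set ℕ) (p : ℕ → ℝ) (k : ℕ → ℕ → ℝ) (ι : ℝ → ℕ) (T : ℕ → ℝ → ℝ)
    (n : ℕ) (y : ℝ) : ℝ :=
  ∑' ω : Words Ωs, if ι (rwordApply T ω.1 y) = n then rdelta p k ι T ω.1 y else 0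

def lastLetterEquiv (Ωs : Set ℕ) :
    Words Ωs × Ωs ≃ {ω : List ℕ // (∀ j ∈ ω, j ∈ Ωs) ∧ ω ≠ []} where
  toFun q := ⟨q.1.1 ++ [q.2.1], fun j hj => (List.mem_append.mp hj).elim (q.1.2 j)
    (fun h => (List.mem_singleton.mp h) ▸ q.2.2), by simp⟩
  invFun ω := (⟨ω.1.dropLast, fun j hj => ω.2.1 j (List.dropLast_subset ω.1 hj)⟩,
    ⟨ω.1.getLast ω.2.2, ω.2.1 _ (List.getLast_mem ω.2.2)⟩)
  left_inv q := by
    refine Prod.ext (Subtype.ext ?_) (Subtype.ext ?_) <;> simp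
  right_inv ω := Subtype.ext (List.dropLast_append_getLast ω.2.2)

lemma summable_mul_of_abs_le {α : Type*} {w g : α → ℝ} {C : ℝ}
    (hw : Summable fun j => |w j|) (hg : ∀ j, |g j| ≤ C) : Summable fun j => w j * g j :=
  (hw.mul_right C).of_norm_bounded fun j => by
    rw [Real.norm_eq_abs, abs_mul]
    exact mul_le_mul_of_nonneg_left (hg j) (abs_nonneg _)

section Kernels

variable {Ωs : Set ℕ} {p : ℕ → ℝ} {k : ℕ → ℕ → ℝ} {ι : ℝ → ℕ} {T : ℕ → ℝ → ℝ}
  {X : Set ℝ} {ρ : ℝ} {N : ℕ} {y : ℝ}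

lemma KB_eq_sum_landingSum (hp : ∀ j ∈ Ωs, 0 ≤ p j) (hT : ∀ j ∈ Ωs, MapsTo (T j) X X)
    (hA : ∀ x ∈ X, Summable (fun j : Ωs => p j / |k (ι x) j|) ∧
      ∑' j : Ωs, p j / |k (ι x) j| ≤ ρ) (hρ : ρ < 1) (hι : ∀ x ∈ X, ι x ≤ N)
    (hy : y ∈ X) (i : ℕ) :
    KB Ωs p k ι T i y = ∑ n ∈ Finset.Icc (i + 1) N, landingSum Ωs p k ι T n y := by
  have hsplit : ∀ ω : Words Ωs,
      (if i < ι (rwordApply T ω.1 y) then rdelta p k ι T ω.1 y else 0) =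
        ∑ n ∈ Finset.Icc (i + 1) N,
          if ι (rwordApply T ω.1 y) = n then rdelta p k ι T ω.1 y else 0 := by
    intro ω
    have := hι _ (mapsTo_rwordApply hT ω.1 ω.2 hy)
    simp only [Finset.sum_ite_eq, Finset.mem_Icc]
    exact if_congr (by omega) rfl rfl
  calc KB Ωs p k ι T i y
      = ∑' ω : Words Ωs, ∑ n ∈ Finset.Icc (i + 1) N,
          if ι (rwordApply T ω.1 y) = n then rdelta p k ι T ω.1 y else 0 := tsum_congr hsplit
    _ = ∑ n ∈ Finset.Icc (i + 1) N, landingSum Ωs p k ι T n y :=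
        Summable.tsum_finsetSum fun n _ =>
          (summable_ite_rdelta hp hT hA hρ hy fun ω => ι (rwordApply T ω y) = n).1.of_norm

lemma KI_eq_Sav_mul_landingSum (hp : ∀ j ∈ Ωs, 0 ≤ p j) (hT : ∀ j ∈ Ωs, MapsTo (T j) X X)
    (hA : ∀ x ∈ X, Summable (fun j : Ωs => p j / |k (ι x) j|) ∧
      ∑' j : Ωs, p j / |k (ι x) j| ≤ ρ) (hρ : ρ < 1) (hy : y ∈ X) {n : ℕ}
    (hn : Summable (fun j : Ωs => p j / |k n j|)) :
    KI Ωs p k ι T n y = Sav Ωs p k n * landingSum Ωs p k ι T n y := by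
  have hlast : ∀ q : Words Ωs × Ωs,
      (if ι (rwordApply T (lastLetterEquiv Ωs q).1.dropLast y) = n
        then rdelta p k ι T (lastLetterEquiv Ωs q).1 y else 0) =
      (if ι (rwordApply T q.1.1 y) = n then rdelta p k ι T q.1.1 y else 0) *
        (p q.2 / k n q.2) := by
    rintro ⟨ω, j⟩
    change (if ι (rwordApply T (ω.1 ++ [j.1]).dropLast y) = n
      then rdelta p k ι T (ω.1 ++ [j.1]) y else 0) = _
    rw [List.dropLast_concat, rdelta_append_singleton]
    split_ifs with h
    · rw [h]
    · rw [zero_mul]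
  have hw : Summable (fun j : Ωs => ‖p j / k n j‖) := by
    simpa only [Real.norm_eq_abs, abs_div, abs_of_nonneg (hp _ (Subtype.prop _))] using hn
  rw [KI, ← (lastLetterEquiv Ωs).tsum_eq, tsum_congr hlast, mul_comm]
  exact (tsum_mul_tsum_of_summable_norm (summable_ite_rdelta hp hT hA hρ hy
    fun ω => ι (rwordApply T ω y) = n).1 hw).symm

lemma abs_KB_le (hp : ∀ j ∈ Ωs, 0 ≤ p j) (hT : ∀ j ∈ Ωs, MapsTo (T j) X X)
    (hA : ∀ x ∈ X, Summable (fun j : Ωs => p j / |k (ι x) j|) ∧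
      ∑' j : Ωs, p j / |k (ι x) j| ≤ ρ) (hρ : ρ < 1) (hy : y ∈ X) (i : ℕ) :
    |KB Ωs p k ι T i y| ≤ (1 - ρ)⁻¹ :=
  (summable_ite_rdelta hp hT hA hρ hy fun ω => i < ι (rwordApply T ω y)).2

lemma abs_KI_le (hp : ∀ j ∈ Ωs, 0 ≤ p j) (hT : ∀ j ∈ Ωs, MapsTo (T j) X X)
    (hA : ∀ x ∈ X, Summable (fun j : Ωs => p j / |k (ι x) j|) ∧
      ∑' j : Ωs, p j / |k (ι x) j| ≤ ρ) (hρ : ρ < 1) (hy : y ∈ X) {n : ℕ}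
    (hn : Summable (fun j : Ωs => p j / |k n j|)) :
    |KI Ωs p k ι T n y| ≤ |Sav Ωs p k n| * (1 - ρ)⁻¹ := by
  rw [KI_eq_Sav_mul_landingSum hp hT hA hρ hy hn, abs_mul]
  exact mul_le_mul_of_nonneg_left
    (summable_ite_rdelta hp hT hA hρ hy fun ω => ι (rwordApply T ω y) = n).2 (abs_nonneg _)

lemma sum_inv_Sav_mul_tsum_KI (hp : ∀ j ∈ Ωs, 0 ≤ p j) (hT : ∀ j ∈ Ωs, MapsTo (T j) X X)
    (hA : ∀ x ∈ X, Summable (fun j : Ωs => p j / |k (ι x) j|) ∧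
      ∑' j : Ωs, p j / |k (ι x) j| ≤ ρ) (hρ : ρ < 1) (hι : ∀ x ∈ X, ι x ≤ N) (i : ℕ)
    (hw : ∀ n ∈ Finset.Icc (i + 1) N, Summable (fun j : Ωs => p j / |k n j|))
    (hS : ∀ n ∈ Finset.Icc (i + 1) N, Sav Ωs p k n ≠ 0)
    {c : Ωs → ℝ} (hc : Summable fun j => |c j|) {a : Ωs → ℝ} (ha : ∀ j, a j ∈ X) :
    ∑ n ∈ Finset.Icc (i + 1) N, (Sav Ωs p k n)⁻¹ * ∑' j, c j * KI Ωs p k ι T n (a j) =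
      ∑' j, c j * KB Ωs p k ι T i (a j) := by
  have hKI : ∀ n ∈ Finset.Icc (i + 1) N,
      (Sav Ωs p k n)⁻¹ * ∑' j, c j * KI Ωs p k ι T n (a j) =
        ∑' j, c j * landingSum Ωs p k ι T n (a j) := by
    intro n hn
    simp only [KI_eq_Sav_mul_landingSum hp hT hA hρ (ha _) (hw n hn), ← tsum_mul_left]
    refine tsum_congr fun j => ?_
    rw [mul_left_comm, inv_mul_cancel_left₀ (hS n hn)]
  have hsum : ∀ n ∈ Finset.Icc (i + 1) N,
      Summable fun j => c j * landingSum Ωs p k ι T n (a j) := fun n _ =>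
    summable_mul_of_abs_le hc fun j =>
      (summable_ite_rdelta hp hT hA hρ (ha j) fun ω => ι (rwordApply T ω (a j)) = n).2
  rw [Finset.sum_congr rfl hKI, ← Summable.tsum_finsetSum hsum]
  refine tsum_congr fun j => ?_
  rw [← Finset.mul_sum, KB_eq_sum_landingSum hp hT hA hρ hι (ha j)]

end Kernels

lemma sum_Icc_inv_mul_ite_self {f : ℕ → ℝ} {l N : ℕ} (i : ℕ) (hl : l ≤ N) (hf : f l ≠ 0) :
    ∑ n ∈ Finset.Icc (i + 1) N, (f n)⁻¹ * (if n = l then f l else 0) =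
      if i < l then 1 else 0 := by
  simp only [mul_ite, mul_zero, Finset.sum_ite_eq', Finset.mem_Icc, inv_mul_cancel₀ hf]
  exact if_congr (by omega) rfl rfl

section FundamentalMatrix

variable {Ωs : Set ℕ} {p : ℕ → ℝ} {k d : ℕ → ℕ → ℝ} {ι : ℝ → ℕ} {z : ℕ → ℝ}
  {X : Set ℝ} {ρ : ℝ} {N : ℕ}

lemma fundM_eq {n m : ℕ} (hm : Summable fun j : Ωs => p j / k m j)
    (hm1 : Summable fun j : Ωs => p j / k (m + 1) j)
    (ha : Summable fun j : Ωs => p j / k m j * KI Ωs p k ι (Tpl k d ι) n (aPt k d z m j))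
    (hb : Summable fun j : Ωs =>
      p j / k (m + 1) j * KI Ωs p k ι (Tpl k d ι) n (bPt k d z m j)) :
    fundM Ωs p k d ι z n m =
      (if n = m then Sav Ωs p k m else 0) - (if n = m + 1 then Sav Ωs p k (m + 1) else 0) +
        (∑' j : Ωs, p j / k m j * KI Ωs p k ι (Tpl k d ι) n (aPt k d z m j) -
          ∑' j : Ωs, p j / k (m + 1) j * KI Ωs p k ι (Tpl k d ι) n (bPt k d z m j)) := by
  have hite : ∀ l, (Summable fun j : Ωs => p j / k l j) → ∀ (P : Prop) [Decidable P],
      (Summable fun j : Ωs => if P then p j / k l j else 0) ∧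
        ∑' j : Ωs, (if P then p j / k l j else 0) = if P then Sav Ωs p k l else 0 :=
    fun l hl P _ => by split_ifs <;> simp [hl, Sav]
  obtain ⟨h1, e1⟩ := hite m hm (n = m)
  obtain ⟨h2, e2⟩ := hite (m + 1) hm1 (n = m + 1)
  rw [fundM, Summable.tsum_add (h1.sub h2) (ha.sub hb), Summable.tsum_sub h1 h2,
    Summable.tsum_sub ha hb, e1, e2]

lemma sum_inv_Sav_mul_fundM (hp : ∀ j ∈ Ωs, 0 ≤ p j)
    (hT : ∀ j ∈ Ωs, MapsTo (Tpl k d ι j) X X) (hι : ∀ x ∈ X, ι x ∈ Finset.Icc 1 N)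
    (hA2 : ∀ n ∈ Finset.Icc 1 N,
      Summable (fun j : Ωs => p j / |k n j|) ∧ ∑' j : Ωs, p j / |k n j| ≤ ρ)
    (hρ : ρ < 1) (hS : ∀ n ∈ Finset.Icc 1 N, Sav Ωs p k n ≠ 0) {m : ℕ}
    (hm : m ∈ Finset.Icc 1 (N - 1)) (hab : ∀ j ∈ Ωs, aPt k d z m j ∈ X ∧ bPt k d z m j ∈ X)
    (i : ℕ) :
    ∑ n ∈ Finset.Icc (i + 1) N, (Sav Ωs p k n)⁻¹ * fundM Ωs p k d ι z n m =
      ∑' j : Ωs, (p j / k m j * KB Ωs p k ι (Tpl k d ι) i (aPt k d z m j) -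
        p j / k (m + 1) j * KB Ωs p k ι (Tpl k d ι) i (bPt k d z m j)) -
      if m = i then 1 else 0 := by
  have hA : ∀ x ∈ X, Summable (fun j : Ωs => p j / |k (ι x) j|) ∧
      ∑' j : Ωs, p j / |k (ι x) j| ≤ ρ := fun x hx => hA2 _ (hι x hx)
  have hw : ∀ n ∈ Finset.Icc 1 N, Summable fun j : Ωs => |p j / k n j| := fun n hn => by
    simpa only [abs_div, abs_of_nonneg (hp _ (Subtype.prop _))] using (hA2 n hn).1
  have hsub : Finset.Icc (i + 1) N ⊆ Finset.Icc 1 N := Finset.Icc_subset_Icc (by omega) le_rfl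
  obtain ⟨hm1, hmN⟩ := Finset.mem_Icc.mp hm
  have hmI : m ∈ Finset.Icc 1 N := Finset.mem_Icc.mpr ⟨hm1, by omega⟩
  have hm1I : m + 1 ∈ Finset.Icc 1 N := Finset.mem_Icc.mpr ⟨by omega, by omega⟩
  have ha : ∀ j : Ωs, aPt k d z m j ∈ X := fun j => (hab j j.2).1
  have hb : ∀ j : Ωs, bPt k d z m j ∈ X := fun j => (hab j j.2).2
  have hKI : ∀ n ∈ Finset.Icc 1 N, ∀ l ∈ Finset.Icc 1 N, ∀ {a : Ωs → ℝ}, (∀ j, a j ∈ X) →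
      Summable fun j : Ωs => p j / k l j * KI Ωs p k ι (Tpl k d ι) n (a j) :=
    fun n hn l hl _ ha => summable_mul_of_abs_le (hw l hl) fun j =>
      abs_KI_le hp hT hA hρ (ha j) (hA2 n hn).1
  have hKB : ∀ l ∈ Finset.Icc 1 N, ∀ {a : Ωs → ℝ}, (∀ j, a j ∈ X) →
      Summable fun j : Ωs => p j / k l j * KB Ωs p k ι (Tpl k d ι) i (a j) :=
    fun l hl _ ha => summable_mul_of_abs_le (hw l hl) fun j => abs_KB_le hp hT hA hρ (ha j) i
  have hι' : ∀ x ∈ X, ι x ≤ N := fun x hx => (Finset.mem_Icc.mp (hι x hx)).2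
  have hwi : ∀ n ∈ Finset.Icc (i + 1) N, Summable fun j : Ωs => p j / |k n j| :=
    fun n hn => (hA2 n (hsub hn)).1
  have hSi : ∀ n ∈ Finset.Icc (i + 1) N, Sav Ωs p k n ≠ 0 := fun n hn => hS n (hsub hn)
  calc ∑ n ∈ Finset.Icc (i + 1) N, (Sav Ωs p k n)⁻¹ * fundM Ωs p k d ι z n m
      = ∑ n ∈ Finset.Icc (i + 1) N, (Sav Ωs p k n)⁻¹ *
          ((if n = m then Sav Ωs p k m else 0) -
            (if n = m + 1 then Sav Ωs p k (m + 1) else 0) +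
          (∑' j : Ωs, p j / k m j * KI Ωs p k ι (Tpl k d ι) n (aPt k d z m j) -
            ∑' j : Ωs, p j / k (m + 1) j * KI Ωs p k ι (Tpl k d ι) n (bPt k d z m j))) :=
        Finset.sum_congr rfl fun n hn => by
          rw [fundM_eq (hw m hmI).of_abs (hw (m + 1) hm1I).of_abs (hKI n (hsub hn) m hmI ha)
            (hKI n (hsub hn) (m + 1) hm1I hb)]
    _ = (if i < m then 1 else 0) - (if i < m + 1 then 1 else 0) +
          (∑' j : Ωs, p j / k m j * KB Ωs p k ι (Tpl k d ι) i (aPt k d z m j) -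
            ∑' j : Ωs, p j / k (m + 1) j * KB Ωs p k ι (Tpl k d ι) i (bPt k d z m j)) := by
        simp only [mul_add, mul_sub, Finset.sum_add_distrib, Finset.sum_sub_distrib,
          sum_Icc_inv_mul_ite_self i (Finset.mem_Icc.mp hmI).2 (hS m hmI),
          sum_Icc_inv_mul_ite_self i (Finset.mem_Icc.mp hm1I).2 (hS (m + 1) hm1I),
          sum_inv_Sav_mul_tsum_KI hp hT hA hρ hι' i hwi hSi (hw m hmI) ha,
          sum_inv_Sav_mul_tsum_KI hp hT hA hρ hι' i hwi hSi (hw (m + 1) hm1I) hb]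
    _ = _ := by
        rw [Summable.tsum_sub (hKB m hmI ha) (hKB (m + 1) hm1I hb)]
        split_ifs <;> first | (exfalso; omega) | ring

end FundamentalMatrix

theorem stmt_9_general (Ωs : Set ℕ) (N : ℕ) (p : ℕ → ℝ) (ρ : ℝ)
    (hρ1 : ρ < 1)
    (hp : ∀ j ∈ Ωs, 0 < p j)
    (k d : ℕ → ℕ → ℝ) (ι : ℝ → ℕ) (z : ℕ → ℝ)
    (hι : ∀ x ∈ Icc (0:ℝ) 1, ι x ∈ Finset.Icc 1 N)
    (hT : ∀ j ∈ Ωs, ∀ x ∈ Icc (0:ℝ) 1, Tpl k d ι j x ∈ Icc (0:ℝ) 1)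
    (hA2 : ∀ n ∈ Finset.Icc 1 N,
      Summable (fun j : Ωs => p j.1 / |k n j.1|) ∧
        ∑' j : Ωs, p j.1 / |k n j.1| ≤ ρ)
    (hS : ∀ n ∈ Finset.Icc 1 N, Sav Ωs p k n ≠ 0)
    (hab : ∀ i ∈ Finset.Icc 1 (N - 1), ∀ j ∈ Ωs,
      aPt k d z i j ∈ Icc (0:ℝ) 1 ∧ bPt k d z i j ∈ Icc (0:ℝ) 1)
    (γ : ℕ → ℝ)
    (hγ : ∀ n ∈ Finset.Icc 1 N,
      ∑ m ∈ Finset.Icc 1 (N - 1), fundM Ωs p k d ι z n m * γ m = 0) :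
    ∀ i ∈ Finset.Icc 1 (N - 1),
      γ i - ∑ m ∈ Finset.Icc 1 (N - 1), γ m *
        ∑' j : Ωs,
          (p j.1 / k m j.1 * KB Ωs p k ι (Tpl k d ι) i (aPt k d z m j.1) -
            p j.1 / k (m + 1) j.1 * KB Ωs p k ι (Tpl k d ι) i (bPt k d z m j.1)) = 0 := by
  intro i hi
  have hzero : ∑ m ∈ Finset.Icc 1 (N - 1), γ m *
      ∑ n ∈ Finset.Icc (i + 1) N, (Sav Ωs p k n)⁻¹ * fundM Ωs p k d ι z n m = 0 := by
    simp only [Finset.mul_sum]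
    rw [Finset.sum_comm]
    refine Finset.sum_eq_zero fun n hn => ?_
    have hnN : n ∈ Finset.Icc 1 N := by
      rw [Finset.mem_Icc] at hn hi ⊢
      omega
    calc ∑ m ∈ Finset.Icc 1 (N - 1), γ m * ((Sav Ωs p k n)⁻¹ * fundM Ωs p k d ι z n m)
        = (Sav Ωs p k n)⁻¹ * ∑ m ∈ Finset.Icc 1 (N - 1), fundM Ωs p k d ι z n m * γ m := by
          rw [Finset.mul_sum]
          exact Finset.sum_congr rfl fun m _ => by ring
      _ = 0 := by rw [hγ n hnN, mul_zero]
  rw [Finset.sum_congr rfl fun m hm => by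
    rw [sum_inv_Sav_mul_fundM (fun j hj => (hp j hj).le) hT hι hA2 hρ1 hS hm (hab m hm) i]]
    at hzero
  simp only [mul_sub, Finset.sum_sub_distrib, mul_ite, mul_one, mul_zero, Finset.sum_ite_eq',
    if_pos hi] at hzero
  linarith

/-- if `Mγ = 0` for the fundamental matrix `M`, then for all
`1 ≤ i ≤ N-1`:
`γ_i − Σ_m γ_m Σ_j [(p_j/k_{m,j}) KB_i(a_{m,j}) − (p_j/k_{m+1,j}) KB_i(b_{m,j})] = 0`. -/
theorem stmt_9 (Ωs : Set ℕ) (N : ℕ) (hN : 2 ≤ N) (p : ℕ → ℝ) (ρ : ℝ)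
    (hρ0 : 0 < ρ) (hρ1 : ρ < 1)
    (hp : ∀ j ∈ Ωs, 0 < p j) (hpsum : HasSum (fun j : Ωs => p j.1) 1)
    (k d : ℕ → ℕ → ℝ) (ι : ℝ → ℕ) (z : ℕ → ℝ)
    (hι : ∀ x ∈ Icc (0:ℝ) 1, ι x ∈ Finset.Icc 1 N)
    (hk : ∀ n ∈ Finset.Icc 1 N, ∀ j ∈ Ωs, k n j ≠ 0)
    (hT : ∀ j ∈ Ωs, ∀ x ∈ Icc (0:ℝ) 1, Tpl k d ι j x ∈ Icc (0:ℝ) 1)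
    (hA2 : ∀ n ∈ Finset.Icc 1 N,
      Summable (fun j : Ωs => p j.1 / |k n j.1|) ∧
        ∑' j : Ωs, p j.1 / |k n j.1| ≤ ρ)
    (hS : ∀ n ∈ Finset.Icc 1 N, Sav Ωs p k n ≠ 0)
    (hz : ∀ i ∈ Finset.Icc 1 (N - 1), z i ∈ Icc (0:ℝ) 1)
    (hab : ∀ i ∈ Finset.Icc 1 (N - 1), ∀ j ∈ Ωs,
      aPt k d z i j ∈ Icc (0:ℝ) 1 ∧ bPt k d z i j ∈ Icc (0:ℝ) 1)
    (γ : ℕ → ℝ)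
    (hγ : ∀ n ∈ Finset.Icc 1 N,
      ∑ m ∈ Finset.Icc 1 (N - 1), fundM Ωs p k d ι z n m * γ m = 0) :
    ∀ i ∈ Finset.Icc 1 (N - 1),
      γ i - ∑ m ∈ Finset.Icc 1 (N - 1), γ m *
        ∑' j : Ωs,
          (p j.1 / k m j.1 * KB Ωs p k ι (Tpl k d ι) i (aPt k d z m j.1) -
            p j.1 / k (m + 1) j.1 * KB Ωs p k ι (Tpl k d ι) i (bPt k d z m j.1)) = 0 :=
  stmt_9_general Ωs N p ρ hρ1 hp k d ι z hι hT hA2 hS hab γ hγ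

end
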